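/- If (V,⪰_V) is a partially ordered real vector space, (W,⪰_W) a Dedekind complete Riesz space, and h : V → W is monotone and ⪰_W-sublinear, then h(x) = sup { ℓ(x) : ℓ linear, positive, ℓ ≤ h } for every x ∈ V. -/

import Mathlib

open Set LinearMap Submodule

section HB

variable {V W : Type*} [AddCommGroup V] [Module ℝ V]
    [ConditionallyCompleteLattice W] [AddCommGroup W] [Module ℝ W]
    [CovariantClass W W (· + ·) (· ≤ ·)] [PosSMulMono ℝ W]

variable (h : V → W)

theorem hb_step
    (hsub : ∀ x y : V, h (x + y) ≤ h x + h y)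
    (hph : ∀ a : ℝ, 0 ≤ a → ∀ x : V, h (a • x) = a • h x)
    (f : V →ₗ.[ℝ] W) (hle : ∀ z : f.domain, f z ≤ h z) (hdom : f.domain ≠ ⊤) :
    ∃ g, f < g ∧ ∀ z : g.domain, g z ≤ h z := by
  obtain ⟨y, -, hy⟩ : ∃ y ∈ ⊤, y ∉ f.domain := SetLike.exists_of_lt (lt_top_iff_ne_top.2 hdom)
  set S : Set W := (fun z : f.domain => f z - h ((z : V) - y)) '' univ with hS
  have key : ∀ z z' : f.domain, f z - h ((z : V) - y) ≤ h ((z' : V) + y) - f z' := by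
    intro z z'
    have h1 : f z + f z' = f (z + z') := (f.map_add z z').symm
    have h2 : h ((z : V) + (z' : V)) ≤ h ((z : V) - y) + h ((z' : V) + y) := by
      have : (z : V) + (z' : V) = ((z : V) - y) + ((z' : V) + y) := by abel
      rw [this]; exact hsub _ _
    have h3 : f z + f z' ≤ h ((z : V) - y) + h ((z' : V) + y) := by
      rw [h1]
      exact le_trans (hle (z + z')) (by push_cast; exact h2)
    rw [sub_le_sub_iff]
    calc f z + f z' ≤ h ((z : V) - y) + h ((z' : V) + y) := h3
      _ = h ((z' : V) + y) + h ((z : V) - y) := add_comm _ _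
  have Sne : S.Nonempty := ⟨_, mem_image_of_mem _ (mem_univ (0 : f.domain))⟩
  have Sbdd : BddAbove S := by
    refine ⟨h (((0 : f.domain) : V) + y) - f 0, ?_⟩
    rintro w ⟨z, -, rfl⟩
    exact key z 0
  set c : W := sSup S with hc
  have hc1 : ∀ z : f.domain, f z - h ((z : V) - y) ≤ c :=
    fun z => le_csSup Sbdd (mem_image_of_mem _ (mem_univ z))
  have hc2 : ∀ z' : f.domain, c ≤ h ((z' : V) + y) - f z' := by
    intro z'
    refine csSup_le Sne ?_
    rintro w ⟨z, -, rfl⟩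
    exact key z z'
  refine ⟨f.supSpanSingleton y c hy, ?_, ?_⟩
  · refine lt_iff_le_not_ge.2 ⟨f.left_le_sup _ _, fun H => ?_⟩
    replace H := LinearPMap.domain_mono.monotone H
    rw [LinearPMap.domain_supSpanSingleton, sup_le_iff, span_le, singleton_subset_iff] at H
    exact hy H.2
  · rintro ⟨z, hz⟩
    rcases mem_sup.1 hz with ⟨xv, hx, y', hy', rfl⟩
    rcases mem_span_singleton.1 hy' with ⟨r, rfl⟩
    rw [LinearPMap.supSpanSingleton_apply_mk _ _ _ _ _ hx]
    rcases lt_trichotomy r 0 with (hr | hr | hr)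
    · -- r < 0
      have hspos : 0 < -r := neg_pos.2 hr
      have hel := hc1 ((-r)⁻¹ • ⟨xv, hx⟩)
      have hmul := smul_le_smul_of_nonneg_left hel hspos.le
      rw [smul_sub, ← LinearPMap.map_smul, smul_smul, mul_inv_cancel₀ hspos.ne', one_smul] at hmul
      have hco : (((-r)⁻¹ • (⟨xv, hx⟩ : f.domain) : f.domain) : V) = (-r)⁻¹ • xv := rfl
      rw [hco] at hmul
      have harg : h ((-r) • ((-r)⁻¹ • xv - y)) = (-r) • h ((-r)⁻¹ • xv - y) := hph _ hspos.le _
      have harg2 : (-r) • ((-r)⁻¹ • xv - y) = xv + r • y := by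
        rw [smul_sub, smul_smul, mul_inv_cancel₀ hspos.ne', one_smul, neg_smul, sub_neg_eq_add]
      rw [harg2] at harg
      rw [← harg, neg_smul] at hmul
      have h4 := sub_le_iff_le_add.mp hmul
      calc (f ⟨xv, hx⟩ : W) + r • c ≤ (-(r • c) + h (xv + r • y)) + r • c :=
            add_le_add_left h4 _
        _ = h (xv + r • y) := by abel
    · subst hr
      simp only [map_zero, zero_smul, add_zero]
      exact hle ⟨xv, hx⟩
    · -- r > 0
      have hel := hc2 (r⁻¹ • ⟨xv, hx⟩)
      have hmul := smul_le_smul_of_nonneg_left hel hr.le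
      rw [smul_sub, ← LinearPMap.map_smul, smul_smul, mul_inv_cancel₀ hr.ne', one_smul] at hmul
      have hco : ((r⁻¹ • (⟨xv, hx⟩ : f.domain) : f.domain) : V) = r⁻¹ • xv := rfl
      rw [hco] at hmul
      have harg : h (r • (r⁻¹ • xv + y)) = r • h (r⁻¹ • xv + y) := hph r hr.le _
      have harg2 : r • (r⁻¹ • xv + y) = xv + r • y := by
        rw [smul_add, smul_smul, mul_inv_cancel₀ hr.ne', one_smul]
      rw [harg2] at harg
      rw [← harg] at hmul
      -- hmul : r • c ≤ h (xv + r • y) - f ⟨xv,hx⟩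
      exact le_sub_iff_add_le'.mp hmul

theorem hb_exists_top
    (hsub : ∀ x y : V, h (x + y) ≤ h x + h y)
    (hph : ∀ a : ℝ, 0 ≤ a → ∀ x : V, h (a • x) = a • h x)
    (p : V →ₗ.[ℝ] W) (hp : ∀ z : p.domain, p z ≤ h z) :
    ∃ q ≥ p, q.domain = ⊤ ∧ ∀ z : q.domain, q z ≤ h z := by
  set S := { f : V →ₗ.[ℝ] W | ∀ z : f.domain, f z ≤ h z }
  have hSc : ∀ c, c ⊆ S → IsChain (· ≤ ·) c → ∀ y ∈ c, ∃ ub ∈ S, ∀ z ∈ c, z ≤ ub := by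
    intro c hcs c_chain y hy
    have cne : c.Nonempty := ⟨y, hy⟩
    have hcd : DirectedOn (· ≤ ·) c := c_chain.directedOn
    refine ⟨LinearPMap.sSup c hcd, ?_, fun _ ↦ LinearPMap.le_sSup hcd⟩
    rintro ⟨z, hz⟩
    have hdir : DirectedOn (· ≤ ·) (LinearPMap.domain '' c) :=
      directedOn_image.2 (hcd.mono LinearPMap.domain_mono.monotone)
    rcases (mem_sSup_of_directed (cne.image _) hdir).1 hz with ⟨_, ⟨f, hfc, rfl⟩, hfz⟩
    have hle : f ≤ LinearPMap.sSup c hcd := LinearPMap.le_sSup _ hfc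
    calc LinearPMap.sSup c hcd ⟨z, hz⟩ = f ⟨z, hfz⟩ := (hle.2 rfl).symm
      _ ≤ h z := hcs hfc ⟨z, hfz⟩
  obtain ⟨q, hpq, hqs, hq⟩ := zorn_le_nonempty₀ S hSc p hp
  refine ⟨q, hpq, ?_, hqs⟩
  by_contra hqd
  rcases hb_step h hsub hph q hqs hqd with ⟨r, hqr, hr⟩
  exact hqr.ne' ((hq hr hqr.le).antisymm hqr.le)

theorem hb_global
    (hsub : ∀ x y : V, h (x + y) ≤ h x + h y)
    (hph : ∀ a : ℝ, 0 ≤ a → ∀ x : V, h (a • x) = a • h x)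
    (p : V →ₗ.[ℝ] W) (hp : ∀ z : p.domain, p z ≤ h z) :
    ∃ g : V →ₗ[ℝ] W, (∀ z : p.domain, g z = p z) ∧ ∀ v, g v ≤ h v := by
  rcases hb_exists_top h hsub hph p hp with ⟨⟨g_dom, g⟩, ⟨hdom, hfg⟩, rfl : g_dom = ⊤, hgs⟩
  refine ⟨g.comp (LinearMap.id.codRestrict ⊤ fun _ ↦ trivial), fun z => ?_, fun v => ?_⟩
  · exact (hfg rfl).symm
  · exact hgs ⟨v, trivial⟩

end HB

/-- A monotone sublinear map into a Dedekind complete Riesz space is the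
pointwise supremum of the positive linear maps it dominates. -/
theorem stmt_2 {V W : Type*} [AddCommGroup V] [PartialOrder V] [Module ℝ V]
    [CovariantClass V V (· + ·) (· ≤ ·)] [PosSMulMono ℝ V]
    [ConditionallyCompleteLattice W] [AddCommGroup W] [Module ℝ W]
    [CovariantClass W W (· + ·) (· ≤ ·)] [PosSMulMono ℝ W]
    (h : V → W) (hmono : Monotone h)
    (hsub : ∀ x y : V, h (x + y) ≤ h x + h y)
    (hph : ∀ a : ℝ, 0 ≤ a → ∀ x : V, h (a • x) = a • h x)
    (x : V) :
    IsLUB {w : W | ∃ ℓ : V →ₗ[ℝ] W,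
      (∀ v, ℓ v ≤ h v) ∧ (∀ v : V, 0 ≤ v → 0 ≤ ℓ v) ∧ ℓ x = w} (h x) := by
  have h0 : h 0 = 0 := by
    have := hph 0 le_rfl 0
    simpa using this
  -- a linear map dominated by h is automatically positive
  have hpos : ∀ ℓ : V →ₗ[ℝ] W, (∀ v, ℓ v ≤ h v) → ∀ v : V, 0 ≤ v → 0 ≤ ℓ v := by
    intro ℓ hℓ v hv
    have h1 : ℓ (-v) ≤ h (-v) := hℓ (-v)
    have h2 : h (-v) ≤ h 0 := hmono (neg_nonpos.mpr hv)
    have : ℓ (-v) ≤ 0 := by rw [h0] at h2; exact h1.trans h2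
    rw [map_neg] at this
    exact neg_nonpos.mp this
  -- existence of a dominated linear map attaining h x at x
  have hmem : ∃ ℓ : V →ₗ[ℝ] W, (∀ v, ℓ v ≤ h v) ∧ ℓ x = h x := by
    by_cases hx0 : x = 0
    · obtain ⟨g, -, hgle⟩ := hb_global h hsub hph ((0 : V →ₗ[ℝ] W).toPMap ⊥)
        (by rintro ⟨z, hz⟩; obtain rfl : z = 0 := by simpa using hz
            simp [h0, LinearMap.toPMap])
      exact ⟨g, hgle, by simp [hx0, h0]⟩
    · set p : V →ₗ.[ℝ] W := LinearPMap.mkSpanSingleton x (h x) hx0 with hp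
      have hple : ∀ z : p.domain, p z ≤ h z := by
        rintro ⟨z, hz⟩
        rcases Submodule.mem_span_singleton.1 hz with ⟨t, rfl⟩
        have happ : p ⟨t • x, hz⟩ = t • h x := LinearPMap.mkSpanSingleton'_apply _ _ _ t hz
        show p ⟨t • x, hz⟩ ≤ h (t • x)
        rw [happ]
        rcases le_or_gt 0 t with ht | ht
        · rw [hph t ht]
        · have hts : 0 < -t := neg_pos.2 ht
          have h1 : (0 : W) ≤ h (t • x) + (-t) • h x := by
            have h2 := hsub (t • x) ((-t) • x)
            rw [show t • x + (-t) • x = (0 : V) by module, h0, hph (-t) hts.le] at h2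
            exact h2
          rw [neg_smul] at h1
          rw [← sub_eq_add_neg] at h1
          exact sub_nonneg.mp h1
      obtain ⟨g, hg, hgle⟩ := hb_global h hsub hph p hple
      have hxmem : x ∈ p.domain := Submodule.mem_span_singleton_self x
      have hgx : g x = h x := by
        have := hg ⟨x, hxmem⟩
        rw [this]
        exact LinearPMap.mkSpanSingleton_apply ℝ ℝ hx0 (h x)
      exact ⟨g, hgle, hgx⟩
  obtain ⟨ℓ, hℓle, hℓx⟩ := hmem
  constructor
  · rintro w ⟨ℓ', hle', -, rfl⟩
    exact hle' x
  · intro b hb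
    exact hb ⟨ℓ, hℓle, hpos ℓ hℓle, hℓx⟩
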